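/- In the setting of the coupled population Lagrangian, let Δ₁, Δ₂ : S × A → ℝ and define the second-order soft-value remainder R_Ω(Δ₂)(s) = Ω(q₂* + Δ₂)(s) − Ω(q₂*)(s) − ∑_a π₂*(a|s)·Δ₂(s,a). (i) If l₁*, l₂* satisfy the coupled adjoint identities (⟨l₂*, h − γ₂·P₂^{π₂*} h⟩_{ρ₂} = ⟨q₂*, h⟩_{ρ₂} and ⟨l₁*, h − γ₁·P₁^μ h⟩_{ρ₁} = β·⟨q₁*, h⟩_{ρ₁} + ⟨l₂*, h − Π_μ h⟩_{ρ₂} for all h), then L^β(q₁*+Δ₁, q₂*+Δ₂, l₁*, l₂*) − L^β(q₁*, q₂*, l₁*, l₂*) = (β/2)‖Δ₁‖²_{ρ₁} + (1/2)‖Δ₂‖²_{ρ₂} + γ₂·⟨l₂*, P₂ R_Ω(Δ₂)⟩_{ρ₂}. (ii) If instead the modular source dual l₁^{mod} satisfies only ⟨l₁^{mod}, h − γ₁·P₁^μ h⟩_{ρ₁} = β·⟨q₁*, h⟩_{ρ₁} for all h, then L^β(q₁*+Δ₁, q₂*+Δ₂, l₁^{mod}, l₂*) − L^β(q₁*, q₂*,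 l₁^{mod}, l₂*) = (β/2)‖Δ₁‖²_{ρ₁} + (1/2)‖Δ₂‖²_{ρ₂} + γ₂·⟨l₂*, P₂ R_Ω(Δ₂)⟩_{ρ₂} + ⟨l₂*, Δ₁ − Π_μ Δ₁⟩_{ρ₂}, i.e. the linear term ⟨l₂*, (I−Π_μ)Δ₁⟩_{ρ₂} survives. -/
import Mathlib


open BigOperators

namespace Stmt8

variable {S A : Type*} [Fintype S] [Fintype A]

/-- Soft value operator `Ω(q)(s) = τ₂ log ∑_a π_ref(a|s) exp(q(s,a)/τ₂)`. -/
noncomputable def Omega (τ₂ : ℝ) (πref : S → A → ℝ) (q : S × A → ℝ) (s : S) : ℝ :=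
  τ₂ * Real.log (∑ a, πref s a * Real.exp (q (s, a) / τ₂))

/-- Anchor averaging operator `(Π_μ q)(s,a) = ∑_{a'} μ(a'|s) q(s,a')`. -/
def Pimu (μ : S → A → ℝ) (q : S × A → ℝ) (x : S × A) : ℝ :=
  ∑ a', μ x.1 a' * q (x.1, a')

/-- Source residual `b₁(q₁) = u + γ₁ P₁^μ q₁ - q₁`. -/
def b1 (P₁ : Matrix (S × A) (S × A) ℝ) (γ₁ : ℝ) (u q₁ : S × A → ℝ) (x : S × A) : ℝ :=
  u x + γ₁ * ∑ y, P₁ x y * q₁ y - q₁ x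

/-- Target residual `b₂(q₁,q₂) = (I - Π_μ)q₁ + w + γ₂ P₂ Ω(q₂) - q₂`. -/
noncomputable def b2 (P₂ : S → A → S → ℝ) (μ πref : S → A → ℝ) (τ₂ γ₂ : ℝ)
    (w q₁ q₂ : S × A → ℝ) (x : S × A) : ℝ :=
  (q₁ x - Pimu μ q₁ x) + w x + γ₂ * ∑ s', P₂ x.1 x.2 s' * Omega τ₂ πref q₂ s' - q₂ x

/-- Weighted inner product `⟨f,g⟩_ρ = ∑_x ρ(x) f(x) g(x)`. -/
def ip (ρ f g : S × A → ℝ) : ℝ := ∑ x, ρ x * f x * g x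

/-- Coupled population Lagrangian `L^β`. -/
noncomputable def Lag (P₁ : Matrix (S × A) (S × A) ℝ) (P₂ : S → A → S → ℝ)
    (μ πref : S → A → ℝ) (τ₂ γ₁ γ₂ β : ℝ) (u w ρ₁ ρ₂ : S × A → ℝ)
    (q₁ q₂ l₁ l₂ : S × A → ℝ) : ℝ :=
  β / 2 * ip ρ₁ q₁ q₁ + 1 / 2 * ip ρ₂ q₂ q₂ +
    ip ρ₁ l₁ (b1 P₁ γ₁ u q₁) + ip ρ₂ l₂ (b2 P₂ μ πref τ₂ γ₂ w q₁ q₂)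

/-- Soft-optimal policy induced by `q₂*`. -/
noncomputable def pistar (τ₂ : ℝ) (πref : S → A → ℝ) (q₂s : S × A → ℝ) (s : S) (a : A) : ℝ :=
  πref s a * Real.exp (q₂s (s, a) / τ₂) / ∑ a', πref s a' * Real.exp (q₂s (s, a') / τ₂)

/-- Operator `P₂^{π₂*}` acting on functions of `(s,a)`. -/
noncomputable def P2pi (P₂ : S → A → S → ℝ) (τ₂ : ℝ) (πref : S → A → ℝ)
    (q₂s : S × A → ℝ) (q : S × A → ℝ) (x : S × A) : ℝ :=
  ∑ s', P₂ x.1 x.2 s' * ∑ a', pistar τ₂ πref q₂s s' a' * q (s', a')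

/-- Second-order soft-value remainder
`R_Ω(Δ₂)(s) = Ω(q₂*+Δ₂)(s) − Ω(q₂*)(s) − ∑_a π₂*(a|s) Δ₂(s,a)`. -/
noncomputable def ROmega (τ₂ : ℝ) (πref : S → A → ℝ) (q₂s Δ₂ : S × A → ℝ) (s : S) : ℝ :=
  Omega τ₂ πref (fun x => q₂s x + Δ₂ x) s - Omega τ₂ πref q₂s s -
    ∑ a, pistar τ₂ πref q₂s s a * Δ₂ (s, a)

end Stmt8

open Stmt8

section Aux

variable {S A : Type*} [Fintype S] [Fintype A]

lemma ip_congr' (ρ f g h : S × A → ℝ) (H : ∀ x, g x = h x) : ip ρ f g = ip ρ f h := by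
  simp [ip, H]

lemma ip_add' (ρ f g h : S × A → ℝ) :
    ip ρ f (fun x => g x + h x) = ip ρ f g + ip ρ f h := by
  simp [ip, mul_add, Finset.sum_add_distrib]

lemma ip_sub' (ρ f g h : S × A → ℝ) :
    ip ρ f (fun x => g x - h x) = ip ρ f g - ip ρ f h := by
  simp [ip, mul_sub, Finset.sum_sub_distrib]

lemma ip_smul' (ρ f g : S × A → ℝ) (c : ℝ) :
    ip ρ f (fun x => c * g x) = c * ip ρ f g := by
  simp only [ip, Finset.mul_sum]
  exact Finset.sum_congr rfl fun x _ => by ring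

lemma ip_sq' (ρ f g : S × A → ℝ) :
    ip ρ (fun x => f x + g x) (fun x => f x + g x) =
      ip ρ f f + 2 * ip ρ f g + ip ρ g g := by
  simp only [ip, Finset.mul_sum, ← Finset.sum_add_distrib]
  exact Finset.sum_congr rfl fun x _ => by ring

lemma b1_expand (P₁ : Matrix (S × A) (S × A) ℝ) (γ₁ : ℝ) (u q₁s Δ₁ : S × A → ℝ) (x : S × A) :
    b1 P₁ γ₁ u (fun y => q₁s y + Δ₁ y) x =
      b1 P₁ γ₁ u q₁s x - (Δ₁ x - γ₁ * ∑ y, P₁ x y * Δ₁ y) := by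
  simp only [b1, mul_add, Finset.sum_add_distrib]
  ring

lemma b2_expand (P₂ : S → A → S → ℝ) (μ πref : S → A → ℝ) (τ₂ γ₂ : ℝ)
    (w q₁s q₂s Δ₁ Δ₂ : S × A → ℝ) (x : S × A) :
    b2 P₂ μ πref τ₂ γ₂ w (fun y => q₁s y + Δ₁ y) (fun y => q₂s y + Δ₂ y) x =
      b2 P₂ μ πref τ₂ γ₂ w q₁s q₂s x + (Δ₁ x - Pimu μ Δ₁ x) +
        γ₂ * (∑ s', P₂ x.1 x.2 s' * ROmega τ₂ πref q₂s Δ₂ s') -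
        (Δ₂ x - γ₂ * P2pi P₂ τ₂ πref q₂s Δ₂ x) := by
  simp only [b2, Pimu, P2pi, ROmega, mul_sub, mul_add, Finset.sum_sub_distrib,
    Finset.sum_add_distrib, Finset.mul_sum]
  ring

lemma lag_diff (P₁ : Matrix (S × A) (S × A) ℝ) (P₂ : S → A → S → ℝ)
    (μ πref : S → A → ℝ) (τ₂ γ₁ γ₂ β : ℝ) (u w ρ₁ ρ₂ : S × A → ℝ)
    (q₁s q₂s l₁ l₂ Δ₁ Δ₂ : S × A → ℝ) :
    Lag P₁ P₂ μ πref τ₂ γ₁ γ₂ β u w ρ₁ ρ₂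
        (fun x => q₁s x + Δ₁ x) (fun x => q₂s x + Δ₂ x) l₁ l₂ -
      Lag P₁ P₂ μ πref τ₂ γ₁ γ₂ β u w ρ₁ ρ₂ q₁s q₂s l₁ l₂ =
      β / 2 * ip ρ₁ Δ₁ Δ₁ + 1 / 2 * ip ρ₂ Δ₂ Δ₂ +
        γ₂ * ip ρ₂ l₂ (fun x => ∑ s', P₂ x.1 x.2 s' * ROmega τ₂ πref q₂s Δ₂ s') +
        (β * ip ρ₁ q₁s Δ₁ - ip ρ₁ l₁ (fun x => Δ₁ x - γ₁ * ∑ y, P₁ x y * Δ₁ y)) +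
        (ip ρ₂ q₂s Δ₂ - ip ρ₂ l₂ (fun x => Δ₂ x - γ₂ * P2pi P₂ τ₂ πref q₂s Δ₂ x)) +
        ip ρ₂ l₂ (fun x => Δ₁ x - Pimu μ Δ₁ x) := by
  have e1 : ip ρ₁ l₁ (b1 P₁ γ₁ u (fun y => q₁s y + Δ₁ y)) =
      ip ρ₁ l₁ (b1 P₁ γ₁ u q₁s) -
        ip ρ₁ l₁ (fun x => Δ₁ x - γ₁ * ∑ y, P₁ x y * Δ₁ y) := by
    rw [ip_congr' ρ₁ l₁ _ _ (b1_expand P₁ γ₁ u q₁s Δ₁), ip_sub']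
  have e2 : ip ρ₂ l₂ (b2 P₂ μ πref τ₂ γ₂ w (fun y => q₁s y + Δ₁ y) (fun y => q₂s y + Δ₂ y)) =
      ip ρ₂ l₂ (b2 P₂ μ πref τ₂ γ₂ w q₁s q₂s) +
        ip ρ₂ l₂ (fun x => Δ₁ x - Pimu μ Δ₁ x) +
        γ₂ * ip ρ₂ l₂ (fun x => ∑ s', P₂ x.1 x.2 s' * ROmega τ₂ πref q₂s Δ₂ s') -
        ip ρ₂ l₂ (fun x => Δ₂ x - γ₂ * P2pi P₂ τ₂ πref q₂s Δ₂ x) := by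
    rw [ip_congr' ρ₂ l₂ _ _ (b2_expand P₂ μ πref τ₂ γ₂ w q₁s q₂s Δ₁ Δ₂), ip_sub',
      ip_add', ip_add', ip_smul']
  have e3 := ip_sq' ρ₁ q₁s Δ₁
  have e4 := ip_sq' ρ₂ q₂s Δ₂
  simp only [Lag, e1, e2, e3, e4]
  ring

end Aux

/-- Corollary (First-order contrast between modular and coupled transfer):
(i) with coupled duals, the fixed-dual expansion of `L^β` around the population
solution has no linear terms; (ii) with the modular source dual, the linear term
`⟨l₂*, (I−Π_μ)Δ₁⟩_{ρ₂}` survives. -/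
theorem stmt_8 {S A : Type*} [Fintype S] [Fintype A] [Nonempty S] [Nonempty A]
    (P₂ : S → A → S → ℝ) (hP₂0 : ∀ s a s', 0 ≤ P₂ s a s') (hP₂1 : ∀ s a, ∑ s', P₂ s a s' = 1)
    (P₁ : Matrix (S × A) (S × A) ℝ) (hP₁0 : ∀ x y, 0 ≤ P₁ x y) (hP₁1 : ∀ x, ∑ y, P₁ x y = 1)
    (μ : S → A → ℝ) (hμ0 : ∀ s a, 0 ≤ μ s a) (hμ1 : ∀ s, ∑ a, μ s a = 1)
    (τ₂ : ℝ) (hτ₂ : 0 < τ₂)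
    (πref : S → A → ℝ) (hπref0 : ∀ s a, 0 < πref s a) (hπref1 : ∀ s, ∑ a, πref s a = 1)
    (γ₁ γ₂ β : ℝ) (hγ₁0 : 0 ≤ γ₁) (hγ₁1 : γ₁ < 1) (hγ₂0 : 0 ≤ γ₂) (hγ₂1 : γ₂ < 1)
    (hβ : 0 ≤ β)
    (u w ρ₁ ρ₂ : S × A → ℝ)
    (hρ₁0 : ∀ x, 0 ≤ ρ₁ x) (hρ₁1 : ∑ x, ρ₁ x = 1)
    (hρ₂0 : ∀ x, 0 ≤ ρ₂ x) (hρ₂1 : ∑ x, ρ₂ x = 1)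
    (q₁s q₂s : S × A → ℝ)
    (hb1 : ∀ x, b1 P₁ γ₁ u q₁s x = 0)
    (hb2 : ∀ x, b2 P₂ μ πref τ₂ γ₂ w q₁s q₂s x = 0) :
    ((∀ l₁s l₂s : S × A → ℝ,
        (∀ h : S × A → ℝ,
          ip ρ₂ l₂s (fun x => h x - γ₂ * P2pi P₂ τ₂ πref q₂s h x) = ip ρ₂ q₂s h) →
        (∀ h : S × A → ℝ,
          ip ρ₁ l₁s (fun x => h x - γ₁ * ∑ y, P₁ x y * h y) =
            β * ip ρ₁ q₁s h + ip ρ₂ l₂s (fun x => h x - Pimu μ h x)) →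
        ∀ Δ₁ Δ₂ : S × A → ℝ,
          Lag P₁ P₂ μ πref τ₂ γ₁ γ₂ β u w ρ₁ ρ₂
              (fun x => q₁s x + Δ₁ x) (fun x => q₂s x + Δ₂ x) l₁s l₂s -
            Lag P₁ P₂ μ πref τ₂ γ₁ γ₂ β u w ρ₁ ρ₂ q₁s q₂s l₁s l₂s =
          β / 2 * ip ρ₁ Δ₁ Δ₁ + 1 / 2 * ip ρ₂ Δ₂ Δ₂ +
            γ₂ * ip ρ₂ l₂s (fun x => ∑ s', P₂ x.1 x.2 s' * ROmega τ₂ πref q₂s Δ₂ s')) ∧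
      (∀ l₁mod l₂s : S × A → ℝ,
        (∀ h : S × A → ℝ,
          ip ρ₂ l₂s (fun x => h x - γ₂ * P2pi P₂ τ₂ πref q₂s h x) = ip ρ₂ q₂s h) →
        (∀ h : S × A → ℝ,
          ip ρ₁ l₁mod (fun x => h x - γ₁ * ∑ y, P₁ x y * h y) = β * ip ρ₁ q₁s h) →
        ∀ Δ₁ Δ₂ : S × A → ℝ,
          Lag P₁ P₂ μ πref τ₂ γ₁ γ₂ β u w ρ₁ ρ₂
              (fun x => q₁s x + Δ₁ x) (fun x => q₂s x + Δ₂ x) l₁mod l₂s -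
            Lag P₁ P₂ μ πref τ₂ γ₁ γ₂ β u w ρ₁ ρ₂ q₁s q₂s l₁mod l₂s =
          β / 2 * ip ρ₁ Δ₁ Δ₁ + 1 / 2 * ip ρ₂ Δ₂ Δ₂ +
            γ₂ * ip ρ₂ l₂s (fun x => ∑ s', P₂ x.1 x.2 s' * ROmega τ₂ πref q₂s Δ₂ s') +
            ip ρ₂ l₂s (fun x => Δ₁ x - Pimu μ Δ₁ x))) := by
  constructor
  · intro l₁s l₂s h2 h1 Δ₁ Δ₂
    rw [lag_diff]
    have H1 := h1 Δ₁
    have H2 := h2 Δ₂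
    linarith
  · intro l₁mod l₂s h2 h1 Δ₁ Δ₂
    rw [lag_diff]
    have H1 := h1 Δ₁
    have H2 := h2 Δ₂
    linarith
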